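/- Let p : E → B be an admissible restriction semifunctor between restriction categories. If m : E' → E is a p-prone morphism of E such that p(m) is a restriction monic in B, then m is a partial isomorphism in E. -/
import Mathlib


open CategoryTheory

universe v₁ u₁ v₂ u₂ v₃ u₃

/-- A restriction category: a category equipped with a restriction combinator
satisfying the four restriction axioms [R.1]–[R.4]. -/
class RestrictionCategory (C : Type u₁) [Category.{v₁} C] where
  rest : ∀ {A B : C}, (A ⟶ B) → (A ⟶ A)
  rest_comp_self : ∀ {A B : C} (f : A ⟶ B), rest f ≫ f = f
  rest_comm : ∀ {A B C' : C} (f : A ⟶ B) (g : A ⟶ C'), rest f ≫ rest g = rest g ≫ rest f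
  rest_rest_comp : ∀ {A B C' : C} (f : A ⟶ B) (g : A ⟶ C'),
    rest (rest f ≫ g) = rest f ≫ rest g
  comp_rest : ∀ {A B C' : C} (f : A ⟶ B) (g : B ⟶ C'),
    f ≫ rest g = rest (f ≫ g) ≫ f

open RestrictionCategory

/-- A restriction semifunctor: preserves composition and restriction
(but not necessarily identities). -/
structure RestrictionSemifunctor (E : Type u₁) (B : Type u₂) [Category.{v₁} E]
    [Category.{v₂} B] [RestrictionCategory E] [RestrictionCategory B] where
  obj : E → B
  map : ∀ {X Y : E}, (X ⟶ Y) → (obj X ⟶ obj Y)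
  map_comp : ∀ {X Y Z : E} (f : X ⟶ Y) (g : Y ⟶ Z), map (f ≫ g) = map f ≫ map g
  map_rest : ∀ {X Y : E} (f : X ⟶ Y), map (rest f) = rest (map f)

variable {E : Type u₁} {B : Type u₂} [Category.{v₁} E] [Category.{v₂} B]
  [RestrictionCategory E] [RestrictionCategory B]

/-- A morphism `f' : X' ⟶ X` is `p`-prone if every precise triangle
`h ≫ p(f') = p(g)` in the base has a unique precise lifting. -/
def RestrictionSemifunctor.IsProne (p : RestrictionSemifunctor E B) {X' X : E}
    (f' : X' ⟶ X) : Prop :=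
  ∀ (Y : E) (g : Y ⟶ X) (h : p.obj Y ⟶ p.obj X'),
    h ≫ p.map f' = p.map g → rest h = rest (p.map g) →
    ∃! ht : Y ⟶ X', p.map ht = h ∧ ht ≫ f' = g ∧ rest ht = rest g

/-- A partial isomorphism: `f` with a partial inverse `g` satisfying
`f ≫ g = f̄` and `g ≫ f = ḡ`. -/
def IsPartialIso {C : Type u₃} [Category.{v₃} C] [RestrictionCategory C]
    {A B : C} (f : A ⟶ B) : Prop :=
  ∃ g : B ⟶ A, f ≫ g = rest f ∧ g ≫ f = rest g

/-- A restriction monic: `m : B ⟶ A` with `r : A ⟶ B` such that `m ≫ r = 𝟙 B`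
and `r ≫ m = r̄`. -/
def IsRestrictionMonic {C : Type u₃} [Category.{v₃} C] [RestrictionCategory C]
    {A B : C} (m : B ⟶ A) : Prop :=
  ∃ r : A ⟶ B, m ≫ r = 𝟙 B ∧ r ≫ m = rest r

/-- A restriction semifunctor is admissible if every restriction idempotent `e` on
`p(X)` with `e ≫ p(𝟙 X) = e` has a p-prone restriction idempotent on `X` over it. -/
def RestrictionSemifunctor.IsAdmissible (p : RestrictionSemifunctor E B) : Prop :=
  ∀ (X : E) (e : p.obj X ⟶ p.obj X), rest e = e → e ≫ p.map (𝟙 X) = e →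
    ∃ es : X ⟶ X, rest es = es ∧ p.IsProne es ∧ p.map es = e

section Helpers

variable {C : Type u₃} [Category.{v₃} C] [RestrictionCategory C]

lemma rest_one' (A : C) : rest (𝟙 A) = 𝟙 A := by
  have h := rest_comp_self (𝟙 A)
  simpa using h

lemma rest_idem' {A B' : C} (f : A ⟶ B') : rest f ≫ rest f = rest f := by
  have h := rest_rest_comp f f
  rw [rest_comp_self] at h
  exact h.symm

lemma rest_rest' {A B' : C} (f : A ⟶ B') : rest (rest f) = rest f := by
  have h := rest_rest_comp f (rest f)
  rw [rest_idem'] at h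
  rw [h, rest_comm f (rest f), rest_comp_self]

lemma rest_comp_absorb' {A B' C' : C} (f : A ⟶ B') (g : B' ⟶ C') :
    rest (f ≫ g) ≫ rest f = rest (f ≫ g) := by
  have h1 : f ≫ g = rest f ≫ (f ≫ g) := by
    rw [← Category.assoc, rest_comp_self]
  have h2 : rest (f ≫ g) = rest f ≫ rest (f ≫ g) := by
    conv_lhs => rw [h1]
    exact rest_rest_comp f (f ≫ g)
  rw [← rest_comm f (f ≫ g), ← h2]

lemma rest_comp_rest' {A B' C' : C} (f : A ⟶ B') (g : B' ⟶ C') :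
    rest (f ≫ rest g) = rest (f ≫ g) := by
  rw [comp_rest f g]
  rw [rest_rest_comp (f ≫ g) f]
  exact rest_comp_absorb' f g

end Helpers

/-- For an admissible restriction semifunctor, a p-prone morphism over a restriction
monic is a partial isomorphism. -/
theorem admissible_prone_over_restrictionMonic_partialIso
    (p : RestrictionSemifunctor E B) (hadm : p.IsAdmissible)
    {E' E'' : E} (m : E' ⟶ E'') (hprone : p.IsProne m)
    (hmonic : IsRestrictionMonic (p.map m)) :
    IsPartialIso m := by
  obtain ⟨r, hr1, hr2⟩ := hmonic
  -- p.map m is total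
  have rest_pm : rest (p.map m) = 𝟙 (p.obj E') := by
    have h := rest_comp_absorb' (p.map m) r
    rw [hr1, rest_one'] at h
    simpa using h
  set i : p.obj E'' ⟶ p.obj E'' := p.map (𝟙 E'') with hi
  have hi_rest : rest i = i := by
    have : i = p.map (rest (𝟙 E'')) := by rw [rest_one']
    rw [this, p.map_rest, rest_rest', ← p.map_rest, rest_one']
  have hii : i ≫ i = i := by
    rw [hi, ← p.map_comp, Category.comp_id]
  have hmi : p.map m ≫ i = p.map m := by
    rw [hi, ← p.map_comp, Category.comp_id]
  set e : p.obj E'' ⟶ p.obj E'' := i ≫ rest r with he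
  have he_rest : rest e = e := by
    rw [he]
    conv_lhs => rw [← hi_rest]
    rw [rest_rest_comp i (rest r), rest_rest', hi_rest]
  have he_i : e ≫ p.map (𝟙 E'') = e := by
    have hcomm : rest r ≫ i = i ≫ rest r := by
      conv_lhs => rw [← hi_rest]
      conv_rhs => rw [← hi_rest]
      exact rest_comm r i
    show (i ≫ rest r) ≫ i = e
    rw [Category.assoc, hcomm, ← Category.assoc, hii]
  obtain ⟨es, hes_rest, hes_prone, hes_map⟩ := hadm E'' e he_rest he_i
  -- lift of i ≫ r against m
  have hpm_e : p.map m ≫ e = p.map m := by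
    rw [he, ← Category.assoc, hmi, comp_rest (p.map m) r, hr1, rest_one',
      Category.id_comp]
  have hhm : (i ≫ r) ≫ p.map m = p.map es := by
    rw [hes_map, Category.assoc, hr2, he]
  have hhrest : rest (i ≫ r) = rest (p.map es) := by
    rw [hes_map, he_rest]
    conv_lhs => rw [← hi_rest]
    rw [rest_rest_comp i r, hi_rest]
  obtain ⟨g, ⟨hg_map, hg_comp, hg_rest⟩, -⟩ := hprone E'' es (i ≫ r) hhm hhrest
  have hg_rest' : rest g = es := by rw [hg_rest, hes_rest]
  -- m ≫ es = m
  have hes_idem : es ≫ es = es := by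
    rw [← hes_rest]
    exact rest_idem' es
  have hm_es : m ≫ es = m := by
    obtain ⟨t, ⟨ht_map, ht_comp, ht_rest⟩, -⟩ :=
      hes_prone E' m (p.map m) (by rw [hes_map]; exact hpm_e) rfl
    rw [← ht_comp, Category.assoc, hes_idem, ht_comp]
  -- m ≫ g = rest m, via uniqueness of prone lifts of m over 𝟙
  have hcond1 : 𝟙 (p.obj E') ≫ p.map m = p.map m := Category.id_comp _
  have hcond2 : rest (𝟙 (p.obj E')) = rest (p.map m) := by
    rw [rest_one', rest_pm]
  obtain ⟨u, -, huniq⟩ := hprone E' m (𝟙 (p.obj E')) hcond1 hcond2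
  have h1 : rest m = u := by
    apply huniq
    refine ⟨?_, rest_comp_self m, rest_rest' m⟩
    rw [p.map_rest, rest_pm]
  have h2 : m ≫ g = u := by
    apply huniq
    refine ⟨?_, ?_, ?_⟩
    · rw [p.map_comp, hg_map, ← Category.assoc, hmi, hr1]
    · rw [Category.assoc, hg_comp, hm_es]
    · rw [← rest_comp_rest' m g, hg_rest', hm_es]
  exact ⟨g, h2.trans h1.symm, hg_comp.trans hg_rest'.symm⟩
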